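/- arXiv:2204.07867 — 2 statements merged into one kernel-verified Lean document; each statement's English description precedes it below -/
import Mathlib

section
/- For k₁ = π²/4 and k₂ = 2π²/9 (both lying in the interval [1, 4], with numerical values ≈ 2.467401 and ≈ 2.193245), the objective ½(cos(6√k₁) + cos(6√(k₁ + 2k₂))) equals −1. Consequently, the minimum of the MF5.1 objective over the domain 1 ≤ k₁, k₂ ≤ 4 equals −1 and is attained at (k₁, k₂) = (π²/4, 2π²/9). -/
/-- For `k₁ = π²/4` and `k₂ = 2π²/9` (both in `[1,4]`), the MF5.1 objective equals `−1`;
hence the minimum of the objective over `[1,4]²` equals `−1`, attained at this point. -/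
theorem spring_mass_objective_min :
    (Real.pi ^ 2 / 4 ∈ Set.Icc (1 : ℝ) 4) ∧
    (2 * Real.pi ^ 2 / 9 ∈ Set.Icc (1 : ℝ) 4) ∧
    (1 / 2) * (Real.cos (6 * Real.sqrt (Real.pi ^ 2 / 4))
      + Real.cos (6 * Real.sqrt (Real.pi ^ 2 / 4 + 2 * (2 * Real.pi ^ 2 / 9)))) = -1 ∧
    (∀ k₁ k₂ : ℝ, k₁ ∈ Set.Icc (1 : ℝ) 4 → k₂ ∈ Set.Icc (1 : ℝ) 4 →
      -1 ≤ (1 / 2) * (Real.cos (6 * Real.sqrt k₁)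
        + Real.cos (6 * Real.sqrt (k₁ + 2 * k₂)))) := by
  have hpi : (0:ℝ) < Real.pi := Real.pi_pos
  have hpil : (3.141592:ℝ) < Real.pi := by
    have := Real.pi_gt_d6; linarith
  have hpiu : Real.pi < 3.15 := by
    have := Real.pi_lt_d2; linarith
  have h1 : Real.sqrt (Real.pi ^ 2 / 4) = Real.pi / 2 := by
    rw [show Real.pi ^ 2 / 4 = (Real.pi / 2) ^ 2 by ring]
    exact Real.sqrt_sq (by positivity)
  have h2 : Real.sqrt (Real.pi ^ 2 / 4 + 2 * (2 * Real.pi ^ 2 / 9))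
      = 5 * Real.pi / 6 := by
    rw [show Real.pi ^ 2 / 4 + 2 * (2 * Real.pi ^ 2 / 9) = (5 * Real.pi / 6) ^ 2 by ring]
    exact Real.sqrt_sq (by positivity)
  refine ⟨⟨by nlinarith, by nlinarith⟩, ⟨by nlinarith, by nlinarith⟩, ?_, ?_⟩
  · rw [h1, h2]
    have e1 : 6 * (Real.pi / 2) = 3 * Real.pi := by ring
    have e2 : 6 * (5 * Real.pi / 6) = 5 * Real.pi := by ring
    rw [e1, e2]
    have c1 : Real.cos (3 * Real.pi) = -1 := by
      rw [show (3:ℝ) * Real.pi = Real.pi + 2 * Real.pi by ring,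
        Real.cos_add_two_pi, Real.cos_pi]
    have c2 : Real.cos (5 * Real.pi) = -1 := by
      rw [show (5:ℝ) * Real.pi = 3 * Real.pi + 2 * Real.pi by ring,
        Real.cos_add_two_pi, c1]
    rw [c1, c2]; norm_num
  · intro k₁ k₂ _ _
    have := Real.neg_one_le_cos (6 * Real.sqrt k₁)
    have := Real.neg_one_le_cos (6 * Real.sqrt (k₁ + 2 * k₂))
    linarith
end

section
/- The point (k₁, k₂) = (π²/4, 2π²/9) is the unique point of the square [1, 4]² at which the MF5.1 objective ½(cos(6√k₁) + cos(6√(k₁ + 2k₂))) attains the value −1. -/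
open Real

lemma cos_eq_neg_one_aux {x : ℝ} (h : Real.cos x = -1) :
    ∃ n : ℤ, (n : ℝ) * (2 * π) = x - π := by
  have : Real.cos (x - π) = 1 := by
    rw [Real.cos_sub, Real.cos_pi, Real.sin_pi]
    ring_nf
    linarith [h]
  exact (Real.cos_eq_one_iff _).1 this

/-- `(k₁, k₂) = (π²/4, 2π²/9)` is the unique point of `[1,4]²` where the MF5.1 objective
`½(cos(6√k₁) + cos(6√(k₁+2k₂)))` attains the value `−1`. -/
theorem spring_mass_objective_min_unique :
    (1 / 2) * (Real.cos (6 * Real.sqrt (Real.pi ^ 2 / 4))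
      + Real.cos (6 * Real.sqrt (Real.pi ^ 2 / 4 + 2 * (2 * Real.pi ^ 2 / 9)))) = -1 ∧
    (∀ k₁ k₂ : ℝ, k₁ ∈ Set.Icc (1 : ℝ) 4 → k₂ ∈ Set.Icc (1 : ℝ) 4 →
      (1 / 2) * (Real.cos (6 * Real.sqrt k₁)
        + Real.cos (6 * Real.sqrt (k₁ + 2 * k₂))) = -1 →
      k₁ = Real.pi ^ 2 / 4 ∧ k₂ = 2 * Real.pi ^ 2 / 9) := by
  have hπ : (0:ℝ) < π := Real.pi_pos
  have hπ4 : π < 4 := by linarith [Real.pi_lt_d2]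
  have hπ3 : 3 < π := by linarith [Real.pi_gt_d6]
  constructor
  · have h1 : Real.sqrt (π ^ 2 / 4) = π / 2 := by
      rw [show π ^ 2 / 4 = (π / 2) ^ 2 by ring]
      exact Real.sqrt_sq (by positivity)
    have h2 : Real.sqrt (π ^ 2 / 4 + 2 * (2 * π ^ 2 / 9)) = 5 * π / 6 := by
      rw [show π ^ 2 / 4 + 2 * (2 * π ^ 2 / 9) = (5 * π / 6) ^ 2 by ring]
      exact Real.sqrt_sq (by positivity)
    rw [h1, h2, show 6 * (π / 2) = π + 2 * π by ring,
      show 6 * (5 * π / 6) = π + 2 * π + 2 * π by ring,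
      Real.cos_add_two_pi, Real.cos_add_two_pi, Real.cos_pi]
    norm_num
  · intro k₁ k₂ hk₁ hk₂ hobj
    obtain ⟨h1l, h1u⟩ := hk₁
    obtain ⟨h2l, h2u⟩ := hk₂
    have hc1 : Real.cos (6 * Real.sqrt k₁) = -1 ∧
        Real.cos (6 * Real.sqrt (k₁ + 2 * k₂)) = -1 := by
      have b1 := Real.neg_one_le_cos (6 * Real.sqrt k₁)
      have b2 := Real.neg_one_le_cos (6 * Real.sqrt (k₁ + 2 * k₂))
      constructor <;> linarith
    -- bounds on sqrt k₁
    have hs1l : (1:ℝ) ≤ Real.sqrt k₁ := by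
      rw [show (1:ℝ) = Real.sqrt 1 by simp]
      exact Real.sqrt_le_sqrt h1l
    have hs1u : Real.sqrt k₁ ≤ 2 := by
      rw [show (2:ℝ) = Real.sqrt 4 by rw [show (4:ℝ) = 2^2 by norm_num, Real.sqrt_sq]; norm_num]
      exact Real.sqrt_le_sqrt h1u
    obtain ⟨n, hn⟩ := cos_eq_neg_one_aux hc1.1
    have hn1 : n = 1 := by
      have h6 : (6:ℝ) ≤ 6 * Real.sqrt k₁ := by linarith
      have h12 : 6 * Real.sqrt k₁ ≤ 12 := by linarith
      have hnlt : (n:ℝ) < 2 := by nlinarith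
      have hngt : (0:ℝ) < (n:ℝ) := by nlinarith
      have : (0:ℤ) < n := by exact_mod_cast hngt
      have : n < 2 := by exact_mod_cast hnlt
      omega
    have hk1eq : k₁ = π ^ 2 / 4 := by
      subst hn1
      have hx : 6 * Real.sqrt k₁ = 3 * π := by push_cast at hn; linarith
      have hs : Real.sqrt k₁ = π / 2 := by linarith
      have := Real.sq_sqrt (by linarith : (0:ℝ) ≤ k₁)
      rw [hs] at this
      nlinarith [this]
    refine ⟨hk1eq, ?_⟩
    -- second equation
    have hsuml : π ^ 2 / 4 + 2 ≤ k₁ + 2 * k₂ := by rw [hk1eq] at *; linarith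
    have hsumu : k₁ + 2 * k₂ ≤ π ^ 2 / 4 + 8 := by rw [hk1eq] at *; linarith
    have hpos : (0:ℝ) ≤ k₁ + 2 * k₂ := by nlinarith
    have hs2l : π / 2 < Real.sqrt (k₁ + 2 * k₂) := by
      have : Real.sqrt (π^2/4) ≤ Real.sqrt (k₁ + 2 * k₂) := Real.sqrt_le_sqrt (by nlinarith)
      rw [show π^2/4 = (π/2)^2 by ring, Real.sqrt_sq (by positivity)] at this
      rcases lt_or_eq_of_le this with h | h
      · exact h
      · exfalso
        have := Real.sq_sqrt hpos
        rw [← h] at this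
        nlinarith
    have hs2u : Real.sqrt (k₁ + 2 * k₂) < 7 * π / 6 := by
      have h49 : k₁ + 2 * k₂ < (7 * π / 6)^2 := by nlinarith
      have := Real.sqrt_lt_sqrt hpos h49
      rwa [Real.sqrt_sq (by positivity)] at this
    obtain ⟨m, hm⟩ := cos_eq_neg_one_aux hc1.2
    have hm2 : m = 2 := by
      have hl : 3 * π < 6 * Real.sqrt (k₁ + 2 * k₂) := by linarith
      have hu : 6 * Real.sqrt (k₁ + 2 * k₂) < 7 * π := by linarith
      have hmgt : (1:ℝ) < (m:ℝ) := by nlinarith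
      have hmlt : (m:ℝ) < 3 := by nlinarith
      have h1 : (1:ℤ) < m := by exact_mod_cast hmgt
      have h2 : m < 3 := by exact_mod_cast hmlt
      omega
    subst hm2
    have hx : 6 * Real.sqrt (k₁ + 2 * k₂) = 5 * π := by push_cast at hm; linarith
    have hs : Real.sqrt (k₁ + 2 * k₂) = 5 * π / 6 := by linarith
    have hsq := Real.sq_sqrt hpos
    rw [hs] at hsq
    have : k₁ + 2 * k₂ = 25 * π^2 / 36 := by rw [← hsq]; ring
    rw [hk1eq] at this
    linarith
end
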